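/- arXiv:1407.0642 — 9 statements merged into one kernel-verified Lean document; each statement's English description precedes it below -/
import Mathlib

section
/- For real numbers 0 < α₁ ≤ α₂ ≤ ... ≤ α_d < 1, the (d-1)-dimensional simplices S_{α₁}, ..., S_{α_d} have a common point, where S_α denotes the convex hull of the d points v_1, ..., v_d in ℝ^d with v_k = e_1 + e_2 + ... + e_{k-1} + α·e_k. -/
/-- The vertex `v_k = e_1 + ⋯ + e_{k-1} + α·e_k` of the simplex `S_α` in `ℝ^d`. -/
noncomputable def simplexVertex (d : ℕ) (α : ℝ) (k : Fin d) : Fin d → ℝ :=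
  fun i => if i < k then 1 else if i = k then α else 0

/-- The simplex `S_α`: the convex hull of the vertices `v_1, …, v_d`. -/
noncomputable def simplexS (d : ℕ) (α : ℝ) : Set (Fin d → ℝ) :=
  convexHull ℝ (Set.range (simplexVertex d α))

/-- For `0 < α₁ ≤ ⋯ ≤ α_d < 1` the simplices `S_{α₁}, …, S_{α_d}` have a common point. -/
theorem simplices_intersect (d : ℕ) (α : Fin d → ℝ)
    (hmono : Monotone α) (h0 : ∀ i, 0 < α i) (h1 : ∀ i, α i < 1) :
    (⋂ i : Fin d, simplexS d (α i)).Nonempty := by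
  classical
  set x : Fin d → ℝ := fun i =>
    ∑ S ∈ (Finset.univ : Finset (Fin d)).powerset,
      (if (i : ℕ) < S.card then (∏ k ∈ S, α k) * ∏ k ∈ Finset.univ \ S, (1 - α k) else 0)
    with hx
  refine ⟨x, Set.mem_iInter.2 fun j => ?_⟩
  set T : Finset (Fin d) := Finset.univ.erase j with hT
  have hjT : j ∉ T := Finset.notMem_erase j _
  have hins : insert j T = Finset.univ := Finset.insert_erase (Finset.mem_univ j)
  set w : Finset (Fin d) → ℝ := fun S => (∏ k ∈ S, α k) * ∏ k ∈ T \ S, (1 - α k) with hw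
  set lamN : ℕ → ℝ := fun n => ∑ S ∈ T.powerset.filter (fun S => S.card = n), w S with hlam
  have hw0 : ∀ S, 0 ≤ w S := fun S =>
    mul_nonneg (Finset.prod_nonneg fun k _ => (h0 k).le)
      (Finset.prod_nonneg fun k _ => by linarith [h1 k])
  have hlam0 : ∀ n, 0 ≤ lamN n := fun n => Finset.sum_nonneg fun S _ => hw0 S
  have hTcard : ∀ S ∈ T.powerset, S.card ∈ Finset.range d := by
    intro S hS
    have h1' : S.card ≤ T.card := Finset.card_le_card (Finset.mem_powerset.1 hS)
    have h2' : T.card < d := by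
      have := Finset.card_erase_lt_of_mem (Finset.mem_univ j)
      simpa [hT] using this
    exact Finset.mem_range.2 (lt_of_le_of_lt h1' h2')
  -- sum of weights is 1
  have hsumN : ∑ n ∈ Finset.range d, lamN n = 1 := by
    rw [hlam]
    rw [Finset.sum_fiberwise_of_maps_to hTcard w]
    rw [hw]
    rw [← Finset.prod_add]
    simp
  have hsumFin : ∑ k : Fin d, lamN (k : ℕ) = 1 := by
    rw [Fin.sum_univ_eq_sum_range (fun n => lamN n) d]; exact hsumN
  -- set identities
  have hU1 : ∀ S : Finset (Fin d), S ⊆ T → Finset.univ \ S = insert j (T \ S) := by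
    intro S hS
    ext m
    have hjS : j ∉ S := fun h => hjT (hS h)
    simp only [Finset.mem_sdiff, Finset.mem_univ, true_and, Finset.mem_insert, hT,
      Finset.mem_erase]
    by_cases hmj : m = j <;> simp [hmj, hjS]
  have hU2 : ∀ S : Finset (Fin d), S ⊆ T → Finset.univ \ insert j S = T \ S := by
    intro S hS
    ext m
    simp only [Finset.mem_sdiff, Finset.mem_univ, true_and, Finset.mem_insert, hT,
      Finset.mem_erase, not_or]
    tauto
  -- the coordinate identity
  have hxeq : x = ∑ k : Fin d, lamN (k : ℕ) • simplexVertex d (α j) k := by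
    funext i
    rw [Finset.sum_apply]
    have step1 : ∑ k : Fin d, (lamN (k : ℕ) • simplexVertex d (α j) k) i
        = ∑ S ∈ T.powerset, w S *
          (if (i : ℕ) < S.card then 1 else if (i : ℕ) = S.card then α j else 0) := by
      have : ∀ k : Fin d, (lamN (k : ℕ) • simplexVertex d (α j) k) i
          = lamN (k : ℕ) * (if (i : ℕ) < (k : ℕ) then 1 else if (i : ℕ) = (k : ℕ) then α j else 0) := by
        intro k
        simp only [Pi.smul_apply, smul_eq_mul, simplexVertex, Fin.lt_def, Fin.ext_iff]
      simp_rw [this]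
      rw [Fin.sum_univ_eq_sum_range
        (fun n => lamN n * (if (i : ℕ) < n then 1 else if (i : ℕ) = n then α j else 0)) d]
      rw [← Finset.sum_fiberwise_of_maps_to hTcard
        (fun S => w S * (if (i : ℕ) < S.card then 1 else if (i : ℕ) = S.card then α j else 0))]
      refine Finset.sum_congr rfl fun n _ => ?_
      rw [hlam, Finset.sum_mul]
      refine Finset.sum_congr rfl fun S hS => ?_
      have hc : S.card = n := (Finset.mem_filter.1 hS).2
      rw [hc]
    rw [step1]
    have hxi : x i = ∑ S ∈ (Finset.univ : Finset (Fin d)).powerset,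
        (if (i : ℕ) < S.card then (∏ k ∈ S, α k) * ∏ k ∈ Finset.univ \ S, (1 - α k) else 0) := rfl
    rw [hxi, ← hins, Finset.sum_powerset_insert hjT, hins]
    rw [← Finset.sum_add_distrib]
    refine Finset.sum_congr rfl fun S hS => ?_
    have hSsub : S ⊆ T := Finset.mem_powerset.1 hS
    have hjS : j ∉ S := fun h => hjT (hSsub h)
    have hjTS : j ∉ T \ S := fun h => hjT (Finset.mem_sdiff.1 h).1
    have e1 : ∏ k ∈ Finset.univ \ S, (1 - α k) = (1 - α j) * ∏ k ∈ T \ S, (1 - α k) := by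
      rw [hU1 S hSsub, Finset.prod_insert hjTS]
    have e2 : ∏ k ∈ insert j S, α k = α j * ∏ k ∈ S, α k := Finset.prod_insert hjS
    have e3 : Finset.univ \ insert j S = T \ S := hU2 S hSsub
    have e4 : (insert j S).card = S.card + 1 := Finset.card_insert_of_notMem hjS
    rw [e1, e2, e3, e4, hw]
    rcases lt_trichotomy (i : ℕ) S.card with h | h | h
    · rw [if_pos h, if_pos (Nat.lt_succ_of_lt h), if_pos h]
      ring
    · rw [if_neg (by omega), if_pos (by omega), if_neg (by omega), if_pos h]
      ring
    · rw [if_neg (by omega), if_neg (by omega), if_neg (by omega), if_neg (by omega)]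
      ring
  -- conclude membership
  rw [simplexS, hxeq]
  have hcm := Finset.centerMass_mem_convexHull (Finset.univ : Finset (Fin d))
    (w := fun k : Fin d => lamN (k : ℕ)) (fun k _ => hlam0 k)
    (by rw [hsumFin]; norm_num)
    (z := simplexVertex d (α j)) (fun k _ => Set.mem_range_self k)
  rwa [Finset.centerMass_eq_of_sum_1 _ _ hsumFin] at hcm
end

section
/- Let E_1, ..., E_d be independent events with P(E_i) = α_i. For k = 0, ..., d-1, let c_k be the probability that exactly k of the first d-1 events occur. Then the vector whose i-th coordinate is Σ_{k=0}^{d-1} c_k · (M_α)_{k+1, i} — where M_α is the matrix whose (j, i) entry is α if i = j, 1 if i < j, and 0 if i > j, with α = α_d — equals the vector whose i-th coordinate is the probability that at least i of the d events occur. -/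
open scoped Classical
open MeasureTheory

/-- The matrix `M_α` whose `j`-th row is the vertex `(1,…,1,α,0,…,0)` (with `α` in
position `j`) of the simplex `S_α`:  entry `(j,i)` is `α` if `i = j`, `1` if `i < j`,
and `0` if `i > j`. -/
noncomputable def simplexMatrix (d : ℕ) (α : ℝ) : Fin d → Fin d → ℝ :=
  fun j i => if i < j then 1 else if i = j then α else 0

/-- Auxiliary: rewriting the cardinality of a filtered set as a sum over `univ.erase L`. -/
lemma filter_card_erase_aux {ι : Type*} [Fintype ι] [DecidableEq ι] (L : ι)
    (p : ι → Prop) [DecidablePred p] :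
    (Finset.univ.filter (fun j => j ≠ L ∧ p j)).card
      = ∑ j ∈ Finset.univ.erase L, (if p j then 1 else 0) := by
  rw [Finset.card_filter, ← Finset.sum_erase_add _ _ (Finset.mem_univ L)]
  simp only [ne_eq, not_true_eq_false, false_and, if_false, add_zero]
  refine Finset.sum_congr rfl fun j hj => ?_
  have hjL : j ≠ L := Finset.ne_of_mem_erase hj
  simp [hjL]

/-- Auxiliary: the event "exactly `k` of the events other than `E L` occur" is
independent of `E L`. -/
lemma count_indep_aux {Ω : Type*} [MeasurableSpace Ω] (μ : Measure Ω)
    [IsProbabilityMeasure μ] {ι : Type*} [Fintype ι] [DecidableEq ι]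
    (E : ι → Set Ω) (hmeas : ∀ i, MeasurableSet (E i))
    (hindep : ProbabilityTheory.iIndepSet E μ) (L : ι) (k : ℕ) :
    μ ({ω | (Finset.univ.filter (fun j => j ≠ L ∧ ω ∈ E j)).card = k} ∩ E L)
      = μ {ω | (Finset.univ.filter (fun j => j ≠ L ∧ ω ∈ E j)).card = k} * μ (E L) := by
  classical
  have hindep12 :=
    hindep.indep_generateFrom_of_disjoint hmeas {j | j ≠ L} {L}
      (by simp [Set.disjoint_left])
  have hNmeas1 : Measurable[MeasurableSpace.generateFrom
        {t | ∃ j ∈ ({j | j ≠ L} : Set ι), E j = t}]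
      (fun ω => (Finset.univ.filter (fun j => j ≠ L ∧ ω ∈ E j)).card) := by
    have : (fun ω => (Finset.univ.filter (fun j => j ≠ L ∧ ω ∈ E j)).card)
        = fun ω => ∑ j ∈ Finset.univ.erase L, (if ω ∈ E j then 1 else 0) := by
      funext ω
      exact filter_card_erase_aux L _
    rw [this]
    refine Finset.measurable_sum _ fun j hj => ?_
    refine Measurable.ite ?_ measurable_const measurable_const
    exact MeasurableSpace.measurableSet_generateFrom
      ⟨j, Finset.ne_of_mem_erase hj, rfl⟩
  have h1 : MeasurableSet[MeasurableSpace.generateFrom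
        {t | ∃ j ∈ ({j | j ≠ L} : Set ι), E j = t}]
      {ω | (Finset.univ.filter (fun j => j ≠ L ∧ ω ∈ E j)).card = k} :=
    hNmeas1 (measurableSet_singleton k)
  have h2 : MeasurableSet[MeasurableSpace.generateFrom
        {t | ∃ j ∈ ({L} : Set ι), E j = t}] (E L) :=
    MeasurableSpace.measurableSet_generateFrom ⟨L, rfl, rfl⟩
  exact (hindep12.indepSet_of_measurableSet h1 h2).measure_inter_eq_mul

/-- Let `E_1, …, E_d` (here `d = n+1`) be independent events with `P(E_i) = α_i`, and
for `k = 0, …, d-1` let `c_k` be the probability that exactly `k` of the first `d-1`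
events occur.  Then the convex combination of the rows of `M_{α_d}` with coefficients
`c_0, …, c_{d-1}` has `i`-th coordinate equal to the probability that at least `i` of
the `d` events occur (coordinates are indexed so that the `i`-th coordinate, for
`i : Fin (n+1)`, corresponds to "at least `i+1` events occur"). -/
theorem convex_combination_eq_atLeast_prob
    {Ω : Type*} [MeasurableSpace Ω] (μ : Measure Ω) [IsProbabilityMeasure μ]
    (n : ℕ) (α : Fin (n + 1) → ℝ) (hα : ∀ i, α i ∈ Set.Icc (0:ℝ) 1)
    (E : Fin (n + 1) → Set Ω) (hmeas : ∀ i, MeasurableSet (E i))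
    (hindep : ProbabilityTheory.iIndepSet E μ)
    (hprob : ∀ i, (μ (E i)).toReal = α i)
    (c : Fin (n + 1) → ℝ)
    (hc : ∀ k : Fin (n + 1), c k =
      (μ {ω | (Finset.univ.filter
          (fun i : Fin (n + 1) => i ≠ Fin.last n ∧ ω ∈ E i)).card = k.val}).toReal) :
    ∀ i : Fin (n + 1),
      (∑ k : Fin (n + 1), c k * simplexMatrix (n + 1) (α (Fin.last n)) k i) =
        (μ {ω | i.val + 1 ≤
          (Finset.univ.filter (fun j : Fin (n + 1) => ω ∈ E j)).card}).toReal := by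
  classical
  intro i
  set L : Fin (n + 1) := Fin.last n with hL
  set N : Ω → ℕ := fun ω =>
    (Finset.univ.filter (fun j : Fin (n + 1) => j ≠ L ∧ ω ∈ E j)).card with hN
  set T : Ω → ℕ := fun ω =>
    (Finset.univ.filter (fun j : Fin (n + 1) => ω ∈ E j)).card with hT
  have hNsum : ∀ ω, N ω = ∑ j ∈ Finset.univ.erase L, (if ω ∈ E j then 1 else 0) := by
    intro ω
    exact filter_card_erase_aux L _
  have hTsum : ∀ ω, T ω = N ω + (if ω ∈ E L then 1 else 0) := by
    intro ω
    rw [hT]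
    simp only [Finset.card_filter]
    rw [← Finset.sum_erase_add _ _ (Finset.mem_univ L), hNsum]
  have hNm : Measurable N := by
    rw [funext hNsum]
    exact Finset.measurable_sum _ fun j hj =>
      Measurable.ite (hmeas j) measurable_const measurable_const
  -- key independence computation
  have hkey : μ ({ω | N ω = i.val} ∩ E L) = μ {ω | N ω = i.val} * μ (E L) :=
    count_indep_aux μ E hmeas hindep L i.val
  -- decomposition of the "at least i+1" event
  have hdecomp : {ω | i.val + 1 ≤ T ω} =
      {ω | i.val + 1 ≤ N ω} ∪ ({ω | N ω = i.val} ∩ E L) := by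
    ext ω
    simp only [Set.mem_setOf_eq, Set.mem_union, Set.mem_inter_iff]
    rw [hTsum ω]
    by_cases h : ω ∈ E L <;> simp only [h, if_true, if_false, iff_true, and_true,
      and_false, or_false] <;> omega
  have hdisj : Disjoint {ω | i.val + 1 ≤ N ω} ({ω | N ω = i.val} ∩ E L) := by
    refine Set.disjoint_left.mpr fun ω h1 h2 => ?_
    have h3 := h2.1
    simp only [Set.mem_setOf_eq] at h1 h3
    omega
  have hAi : MeasurableSet ({ω | N ω = i.val} ∩ E L) :=
    (hNm (measurableSet_singleton _)).inter (hmeas L)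
  have hμ : μ {ω | i.val + 1 ≤ T ω} =
      μ {ω | i.val + 1 ≤ N ω} + μ ({ω | N ω = i.val} ∩ E L) := by
    rw [hdecomp, measure_union hdisj hAi]
  -- N is bounded by n
  have hNle : ∀ ω, N ω ≤ n := by
    intro ω
    have hsub : Finset.univ.filter (fun j : Fin (n+1) => j ≠ L ∧ ω ∈ E j) ⊆
        Finset.univ.erase L := by
      intro j hj
      simp only [Finset.mem_filter] at hj
      exact Finset.mem_erase.mpr ⟨hj.2.1, Finset.mem_univ j⟩
    calc N ω ≤ (Finset.univ.erase L).card := Finset.card_le_card hsub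
      _ = n := by simp [Finset.card_erase_of_mem]
  -- cover of the "N ≥ i+1" event
  have hcover : {ω | i.val + 1 ≤ N ω} =
      ⋃ k ∈ Finset.univ.filter (fun k : Fin (n+1) => i < k), {ω | N ω = k.val} := by
    ext ω
    simp only [Set.mem_setOf_eq, Set.mem_iUnion, Finset.mem_filter, Finset.mem_univ,
      true_and, exists_prop]
    constructor
    · intro h
      exact ⟨⟨N ω, Nat.lt_succ_of_le (hNle ω)⟩, by simpa [Fin.lt_def] using h, rfl⟩
    · rintro ⟨k, hik, hk⟩
      have h4 : i.val < k.val := hik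
      omega
  have hμN : μ {ω | i.val + 1 ≤ N ω} =
      ∑ k ∈ Finset.univ.filter (fun k : Fin (n+1) => i < k), μ {ω | N ω = k.val} := by
    rw [hcover, measure_biUnion_finset]
    · intro k _ k' _ hkk'
      refine Set.disjoint_left.mpr fun ω h1 h2 => ?_
      simp only [Set.mem_setOf_eq] at h1 h2
      exact hkk' (Fin.ext (h1 ▸ h2))
    · intro k _
      exact hNm (measurableSet_singleton _)
  -- LHS algebra
  have hLHS : (∑ k : Fin (n+1), c k * simplexMatrix (n + 1) (α L) k i)
      = (∑ k ∈ Finset.univ.filter (fun k : Fin (n+1) => i < k), c k) + c i * α L := by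
    have hterm : ∀ k : Fin (n+1), c k * simplexMatrix (n + 1) (α L) k i
        = (if i < k then c k else 0) + (if k = i then c k * α L else 0) := by
      intro k
      simp only [simplexMatrix]
      rcases lt_trichotomy i k with h | h | h
      · simp [h, h.ne']
      · subst h
        simp [lt_irrefl]
      · simp [h.asymm, h.ne', h.ne]
    rw [Finset.sum_congr rfl fun k _ => hterm k, Finset.sum_add_distrib,
      Finset.sum_ite_eq' Finset.univ i (fun k => c k * α L), ← Finset.sum_filter]
    simp
  -- putting everything together
  show (∑ k : Fin (n+1), c k * simplexMatrix (n + 1) (α L) k i)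
      = (μ {ω | i.val + 1 ≤ T ω}).toReal
  rw [hLHS, hμ, ENNReal.toReal_add (measure_ne_top μ _) (measure_ne_top μ _), hμN,
    hkey, ENNReal.toReal_sum (fun k _ => measure_ne_top μ _), ENNReal.toReal_mul,
    hprob L]
  congr 1
  · exact Finset.sum_congr rfl fun k _ => hc k
  · rw [hc i]
end

section
/- Let A = {A_n : n ≥ 2} with A_n = conv(S_{1/n} ∪ I_n) ⊂ ℝ^{d+1}, where S_{1/n} is the simplex from Lemma lem:simplex embedded in the last d coordinates and I_n = {t·e_1 : t ≥ n}. Let B be any family of bounded convex sets each containing the unit cube [0,1]^d embedded in the last d coordinates. Then the family F = A ∪ B satisfies the (d+1+2k, d+1+k)-property for every k ≥ 0. -/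
/-!
If at most `k` of the chosen members belong to `B`, at least `d+1+k` of them are sets `A_n`,
and these all contain `N • e₁` for `N` the largest index. Otherwise keep `k+1` members of `B`
and fill up with arbitrary others, so that at most `d` sets `A_n` are used. The point of the
cube whose `i`-th coordinate is the probability that at least `i` of independent events with
probabilities `1/n` occur then lies in every chosen member, since it lies in each `S_{1/n}`:
conditioning on the event of probability `α` writes it as a convex combination of the
vertices of `S_α`, the weight of the `k`-th vertex being the probability that exactly `k` of
the other events occur.
-/

open Bornology

/-- In `ℝ^{d+1}`, the `k`-th vertex (`k : Fin d`) of the simplex `S_α` sitting in the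
last `d` coordinates: `e_2 + ⋯ + e_{k+1} + α·e_{k+2}` (1-based), i.e. coordinate `i`
is `1` for `1 ≤ i ≤ k`, `α` for `i = k+1`, and `0` otherwise. -/
noncomputable def embVertex (d : ℕ) (α : ℝ) (k : Fin d) : Fin (d + 1) → ℝ :=
  fun i => if 1 ≤ i.val ∧ i.val ≤ k.val then 1
    else if i.val = k.val + 1 then α else 0

/-- The simplex `S_α ⊆ ℝ^{d+1}` embedded in the last `d` coordinates. -/
noncomputable def embSimplex (d : ℕ) (α : ℝ) : Set (Fin (d + 1) → ℝ) :=
  convexHull ℝ (Set.range (embVertex d α))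

/-- The ray `I_n = {t·e₁ : t ≥ n}` in `ℝ^{d+1}`. -/
noncomputable def rayI (d : ℕ) (n : ℕ) : Set (Fin (d + 1) → ℝ) :=
  {x | ∃ t : ℝ, (n : ℝ) ≤ t ∧ x = t • (Pi.single (0 : Fin (d + 1)) (1:ℝ) : Fin (d+1) → ℝ)}

/-- `A_n = conv(S_{1/n} ∪ I_n) ⊆ ℝ^{d+1}`. -/
noncomputable def ASet (d : ℕ) (n : ℕ) : Set (Fin (d + 1) → ℝ) :=
  convexHull ℝ (embSimplex d (1 / n) ∪ rayI d n)

/-- The unit cube `[0,1]^d` embedded in the last `d` coordinates of `ℝ^{d+1}`. -/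
def embCube (d : ℕ) : Set (Fin (d + 1) → ℝ) :=
  {x | x 0 = 0 ∧ ∀ i : Fin (d + 1), i ≠ 0 → x i ∈ Set.Icc (0:ℝ) 1}

open Finset

noncomputable def atLeastStep (a : ℝ) (F : ℕ → ℝ) : ℕ → ℝ :=
  fun i => (1 - a) * F i + a * F (i - 1)

instance : LeftCommutative atLeastStep where
  left_comm a b F := by
    funext i
    simp only [atLeastStep, Nat.sub_sub]
    ring

/-- The probability that at least `i` of independent events with probabilities `s` occur. -/
noncomputable def atLeastProb (s : Multiset ℝ) : ℕ → ℝ :=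
  s.foldr atLeastStep fun i => if i = 0 then 1 else 0

lemma atLeastProb_cons (a : ℝ) (s : Multiset ℝ) (i : ℕ) :
    atLeastProb (a ::ₘ s) i = (1 - a) * atLeastProb s i + a * atLeastProb s (i - 1) := by
  simp only [atLeastProb, Multiset.foldr_cons, atLeastStep]

lemma atLeastProb_zero (s : Multiset ℝ) : atLeastProb s 0 = 1 := by
  induction s using Multiset.induction_on with
  | empty => simp [atLeastProb]
  | cons a s ih => rw [atLeastProb_cons, ih]; ring

lemma atLeastProb_of_card_lt {s : Multiset ℝ} {i : ℕ} (h : Multiset.card s < i) :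
    atLeastProb s i = 0 := by
  induction s using Multiset.induction_on generalizing i with
  | empty =>
    rw [Multiset.card_zero] at h
    exact if_neg (by omega)
  | cons a s ih =>
    rw [Multiset.card_cons] at h
    rw [atLeastProb_cons, ih (by omega), ih (by omega)]
    ring

lemma atLeastProb_antitone {s : Multiset ℝ} (hs : ∀ a ∈ s, a ∈ Set.Icc (0 : ℝ) 1) :
    Antitone (atLeastProb s) := by
  induction s using Multiset.induction_on with
  | empty =>
    refine antitone_nat_of_succ_le fun i => ?_
    simp only [atLeastProb, Multiset.foldr_zero, if_neg (Nat.succ_ne_zero i)]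
    split_ifs <;> norm_num
  | cons a s ih =>
    obtain ⟨ha₀, ha₁⟩ := hs a (Multiset.mem_cons_self a s)
    have hF := ih fun b hb => hs b (Multiset.mem_cons_of_mem hb)
    refine antitone_nat_of_succ_le fun i => ?_
    rw [atLeastProb_cons, atLeastProb_cons, Nat.add_sub_cancel]
    have h₁ := hF (Nat.le_succ i)
    have h₂ := hF (Nat.sub_le i 1)
    nlinarith

lemma atLeastProb_mem_Icc {s : Multiset ℝ} (hs : ∀ a ∈ s, a ∈ Set.Icc (0 : ℝ) 1)
    (i : ℕ) : atLeastProb s i ∈ Set.Icc (0 : ℝ) 1 := by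
  refine ⟨?_, atLeastProb_zero s ▸ atLeastProb_antitone hs (Nat.zero_le i)⟩
  calc (0 : ℝ) = atLeastProb s (max i (Multiset.card s + 1)) :=
        (atLeastProb_of_card_lt (by omega)).symm
    _ ≤ atLeastProb s i := atLeastProb_antitone hs (le_max_left _ _)

lemma sum_range_sub_mul_ite (G : ℕ → ℝ) (α : ℝ) {j d : ℕ} (hjd : j < d) :
    ∑ k ∈ range d, (G k - G (k + 1)) * (if j < k then 1 else if k = j then α else 0)
      = G (j + 1) - G d + α * (G j - G (j + 1)) := by
  induction d, hjd using Nat.le_induction with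
  | base =>
    rw [sum_range_succ, sum_eq_zero fun k hk => by
      have := mem_range.1 hk
      rw [if_neg (by omega), if_neg (by omega), mul_zero], if_neg (lt_irrefl j), if_pos rfl]
    ring
  | succ d hjd ih =>
    rw [sum_range_succ, ih, if_pos (by omega)]
    ring

lemma embVertex_zero (d : ℕ) (α : ℝ) (k : Fin d) : embVertex d α k 0 = 0 := by
  simp [embVertex]

lemma embVertex_succ (d : ℕ) (α : ℝ) (k j : Fin d) :
    embVertex d α k j.succ = if j.val < k.val then 1 else if k.val = j.val then α else 0 := by
  simp only [embVertex, Fin.val_succ]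
  split_ifs <;> first | rfl | omega

noncomputable def simplexMeetPoint (d : ℕ) (s : Multiset ℝ) : Fin (d + 1) → ℝ :=
  Fin.cons 0 fun j : Fin d => atLeastProb s (j + 1)

lemma simplexMeetPoint_mem_embCube (d : ℕ) {s : Multiset ℝ}
    (hs : ∀ a ∈ s, a ∈ Set.Icc (0 : ℝ) 1) : simplexMeetPoint d s ∈ embCube d := by
  refine ⟨rfl, fun i hi => ?_⟩
  obtain ⟨j, rfl⟩ := Fin.exists_succ_eq_of_ne_zero hi
  exact atLeastProb_mem_Icc hs _

lemma simplexMeetPoint_cons_mem_embSimplex {d : ℕ} (a : ℝ) {s : Multiset ℝ}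
    (hs : ∀ b ∈ s, b ∈ Set.Icc (0 : ℝ) 1) (hcard : Multiset.card s < d) :
    simplexMeetPoint d (a ::ₘ s) ∈ embSimplex d a := by
  have hsum : ∑ k : Fin d, (atLeastProb s k - atLeastProb s (k + 1)) = 1 := by
    rw [Fin.sum_univ_eq_sum_range (fun k => atLeastProb s k - atLeastProb s (k + 1)),
      sum_range_sub', atLeastProb_zero, atLeastProb_of_card_lt hcard, sub_zero]
  have hcomb : ∑ k : Fin d, (atLeastProb s k - atLeastProb s (k + 1)) • embVertex d a k =
      simplexMeetPoint d (a ::ₘ s) := by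
    funext i
    rw [Finset.sum_apply]
    refine Fin.cases ?_ (fun j => ?_) i
    · simp [embVertex_zero, simplexMeetPoint]
    · simp only [Pi.smul_apply, smul_eq_mul, embVertex_succ, simplexMeetPoint, Fin.cons_succ]
      rw [Fin.sum_univ_eq_sum_range (fun k => (atLeastProb s k - atLeastProb s (k + 1)) *
          (if j.val < k then 1 else if k = j.val then a else 0)),
        sum_range_sub_mul_ite (atLeastProb s) a j.isLt, atLeastProb_of_card_lt hcard,
        atLeastProb_cons, Nat.add_sub_cancel]
      ring
  rw [← hcomb]
  exact (convex_convexHull ℝ _).sum_mem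
    (fun k _ => sub_nonneg.2 (atLeastProb_antitone hs (Nat.le_succ k))) hsum
    (fun k _ => subset_convexHull ℝ _ (Set.mem_range_self k))

lemma simplexMeetPoint_mem_embSimplex {d : ℕ} {s : Multiset ℝ}
    (hs : ∀ a ∈ s, a ∈ Set.Icc (0 : ℝ) 1) (hcard : Multiset.card s ≤ d) {a : ℝ}
    (ha : a ∈ s) :
    simplexMeetPoint d s ∈ embSimplex d a := by
  rw [← Multiset.cons_erase ha] at hcard ⊢
  rw [Multiset.card_cons] at hcard
  exact simplexMeetPoint_cons_mem_embSimplex a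
    (fun b hb => hs b (Multiset.mem_of_mem_erase hb)) (by omega)

lemma mem_biInter_sumElim {α β γ : Type*} {J : Finset (α ⊕ β)} {f : α → Set γ}
    {g : β → Set γ} {x : γ} :
    x ∈ ⋂ i ∈ J, Sum.elim f g i ↔
      (∀ a ∈ J.toLeft, x ∈ f a) ∧ ∀ b ∈ J.toRight, x ∈ g b := by
  simp [Sum.forall]

lemma exists_subset_card_eq_toRight_eq_empty_or_card_toLeft_le {α β : Type*}
    (I : Finset (α ⊕ β)) (d k : ℕ) (hI : #I = d + 1 + 2 * k) :
    ∃ J ⊆ I, #J = d + 1 + k ∧ (J.toRight = ∅ ∨ #J.toLeft ≤ d) := by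
  have hI' := card_toLeft_add_card_toRight (u := I)
  by_cases hR : #I.toRight ≤ k
  · obtain ⟨T, hT, hTcard⟩ := exists_subset_card_eq (s := I.toLeft) (n := d + 1 + k) (by omega)
    exact ⟨T.map .inl, map_inl_subset_iff_subset_toLeft.2 hT, (card_map _).trans hTcard,
      Or.inl (subset_map_inl.1 subset_rfl).2⟩
  · obtain ⟨R, hR, hRcard⟩ := exists_subset_card_eq (s := I.toRight) (n := k + 1) (by omega)
    obtain ⟨J, hRJ, hJI, hJcard⟩ := exists_subsuperset_card_eq (n := d + 1 + k)
      (map_inr_subset_iff_subset_toRight.2 hR) (by rw [card_map]; omega) (by omega)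
    have hJR := card_le_card (map_inr_subset_iff_subset_toRight.1 hRJ)
    have hJ' := card_toLeft_add_card_toRight (u := J)
    exact ⟨J, hJI, hJcard, Or.inr (by omega)⟩

lemma smul_single_mem_ASet {d n N : ℕ} (h : n ≤ N) :
    (N : ℝ) • (Pi.single 0 1 : Fin (d + 1) → ℝ) ∈ ASet d n :=
  subset_convexHull ℝ _ (Or.inr ⟨N, by exact_mod_cast h, rfl⟩)

lemma biInter_sumElim_ASet_nonempty_of_toRight_eq_empty (d : ℕ) {β : Type*}
    (B : β → Set (Fin (d + 1) → ℝ)) {J : Finset (ℕ ⊕ β)} (hJ : J.toRight = ∅) :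
    (⋂ i ∈ J, Sum.elim (fun n : ℕ => ASet d (n + 2)) B i).Nonempty :=
  ⟨((J.toLeft.sup id + 2 : ℕ) : ℝ) • Pi.single 0 1, mem_biInter_sumElim.2
    ⟨fun n hn => smul_single_mem_ASet
      (by have : n ≤ J.toLeft.sup id := le_sup (f := id) hn; omega), by simp [hJ]⟩⟩

lemma biInter_sumElim_ASet_nonempty_of_card_toLeft_le {d : ℕ} {β : Type*}
    {B : β → Set (Fin (d + 1) → ℝ)} (hBcube : ∀ b, embCube d ⊆ B b)
    {J : Finset (ℕ ⊕ β)} (hJ : #J.toLeft ≤ d) :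
    (⋂ i ∈ J, Sum.elim (fun n : ℕ => ASet d (n + 2)) B i).Nonempty := by
  set s := J.toLeft.val.map fun n : ℕ => 1 / ((n + 2 : ℕ) : ℝ)
  have hs : ∀ a ∈ s, a ∈ Set.Icc (0 : ℝ) 1 := by
    simp only [s, Multiset.mem_map, forall_exists_index, and_imp]
    rintro _ n - rfl
    exact ⟨by positivity, by rw [div_le_one (by positivity)]; norm_cast; omega⟩
  refine ⟨simplexMeetPoint d s, mem_biInter_sumElim.2 ⟨fun n hn => ?_, fun b _ =>
    hBcube b (simplexMeetPoint_mem_embCube d hs)⟩⟩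
  exact subset_convexHull ℝ _ (Or.inl (simplexMeetPoint_mem_embSimplex hs
    (by rwa [Multiset.card_map]) (Multiset.mem_map_of_mem _ hn)))

theorem family_satisfies_pq_property_general (d : ℕ) {β : Type*} (B : β → Set (Fin (d + 1) → ℝ))
    (hBcube : ∀ b, embCube d ⊆ B b) :
    ∀ k : ℕ, ∀ I : Finset (ℕ ⊕ β), I.card = d + 1 + 2 * k →
      ∃ J ⊆ I, J.card = d + 1 + k ∧
        (⋂ i ∈ J, Sum.elim (fun n : ℕ => ASet d (n + 2)) B i).Nonempty := by
  intro k I hI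
  obtain ⟨J, hJI, hJcard, hJ⟩ :=
    exists_subset_card_eq_toRight_eq_empty_or_card_toLeft_le I d k hI
  refine ⟨J, hJI, hJcard, ?_⟩
  rcases hJ with hJ | hJ
  · exact biInter_sumElim_ASet_nonempty_of_toRight_eq_empty d B hJ
  · exact biInter_sumElim_ASet_nonempty_of_card_toLeft_le hBcube hJ

/-- The family `F = A ∪ B`, where `A = {A_n : n ≥ 2}` and `B` is any family of bounded
convex sets each containing the unit cube, satisfies the `(d+1+2k, d+1+k)`-property for
every `k ≥ 0`: among any `d+1+2k` of its members there are `d+1+k` with a common point. -/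
theorem family_satisfies_pq_property (d : ℕ) {β : Type*} (B : β → Set (Fin (d + 1) → ℝ))
    (hBbdd : ∀ b, IsBounded (B b)) (hBconv : ∀ b, Convex ℝ (B b))
    (hBcube : ∀ b, embCube d ⊆ B b) :
    ∀ k : ℕ, ∀ I : Finset (ℕ ⊕ β), I.card = d + 1 + 2 * k →
      ∃ J ⊆ I, J.card = d + 1 + k ∧
        (⋂ i ∈ J, Sum.elim (fun n : ℕ => ASet d (n + 2)) B i).Nonempty :=
  family_satisfies_pq_property_general d B hBcube
end

section
/- Let F be an infinite family of closed convex sets in ℝ^d such that every d+1 members have a common point but ⋂ F = ∅. Then there exists a unit vector v such that for every A ∈ F and every a ∈ A, the ray {a + t·v : t ≥ 0} is contained in A. -/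
/-!
By Helly's theorem every finite subfamily of `F` has a common point. Since the total
intersection is empty, no finite intersection `K` can be compact, so each such `K` is an
unbounded closed convex set and therefore contains a unit ray `a + ℝ≥0 • v` (a limit of unit
directions towards ever farther points of `K`). For a closed convex set a ray from one point
gives a parallel ray from every point, so the recession cones of the `F i` meet the unit sphere
in closed sets with the finite intersection property, and compactness of the sphere concludes.
-/

open Set Metric Filter Topology Module
open scoped NNReal

section RecessionCone

variable {E : Type*} [AddCommGroup E] [Module ℝ E]

def recessionCone (A : Set E) : Set E :=
  {v | ∀ a ∈ A, ∀ t : ℝ, 0 ≤ t → a + t • v ∈ A}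

lemma Convex.add_smul_mem_of_le {A : Set E} (hA : Convex ℝ A) {a v : E} (ha : a ∈ A)
    {r s : ℝ} (hs : a + s • v ∈ A) (hr : 0 ≤ r) (hrs : r ≤ s) : a + r • v ∈ A := by
  rcases (hr.trans hrs).eq_or_lt with rfl | hs_pos
  · simpa [le_antisymm hrs hr] using ha
  convert hA.add_smul_mem ha hs ⟨div_nonneg hr hs_pos.le, (div_le_one hs_pos).2 hrs⟩ using 2
  rw [smul_smul, div_mul_cancel₀ r hs_pos.ne']

variable [TopologicalSpace E] [ContinuousAdd E] [ContinuousSMul ℝ E]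

lemma IsClosed.recessionCone {A : Set E} (hA : IsClosed A) : IsClosed (recessionCone A) := by
  simp only [_root_.recessionCone, ofPred_forall]
  exact isClosed_iInter fun a => isClosed_iInter fun _ => isClosed_iInter fun t =>
    isClosed_iInter fun _ => hA.preimage (f := fun v => a + t • v) (by fun_prop)

lemma Convex.mem_recessionCone_of_forall_add_smul_mem {A : Set E}
    (hAc : IsClosed A) (hAv : Convex ℝ A) {a v : E}
    (hv : ∀ t : ℝ, 0 ≤ t → a + t • v ∈ A) : v ∈ recessionCone A := by
  intro b hb t ht
  -- `b + t • v` is the limit, as `s → ∞`, of the point at ratio `t / s` on `[b, a + s • v]`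
  have hlim : Tendsto (fun s : ℝ => b + t • v + (t / s) • (a - b)) atTop (𝓝 (b + t • v)) := by
    simpa using tendsto_const_nhds.add
      (((tendsto_const_nhds (x := t)).div_atTop tendsto_id).smul_const (a - b))
  refine hAc.mem_of_tendsto hlim ?_
  filter_upwards [eventually_gt_atTop 0, eventually_ge_atTop t] with s hs hts
  convert hAv.add_smul_sub_mem hb (hv s hs.le) ⟨div_nonneg ht hs.le, (div_le_one hs).2 hts⟩
    using 1
  rw [smul_sub (t / s) (a + s • v), smul_add, smul_smul, div_mul_cancel₀ t hs.ne']
  module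

end RecessionCone

lemma not_isBounded_biInter_of_iInter_eq_empty {X ι : Type*} [PseudoMetricSpace X]
    [ProperSpace X] {F : ι → Set X} (hclosed : ∀ i, IsClosed (F i))
    (hfin : ∀ s : Finset ι, (⋂ i ∈ s, F i).Nonempty)
    (hempty : ⋂ i, F i = ∅) (u : Finset ι) : ¬ Bornology.IsBounded (⋂ i ∈ u, F i) := by
  classical
  intro hb
  have hcpt := isCompact_of_isClosed_isBounded (isClosed_biInter fun i _ => hclosed i) hb
  have h := hcpt.inter_iInter_nonempty F hclosed fun w => (hfin (u ∪ w)).mono <|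
    subset_inter (biInter_mono Finset.subset_union_left fun _ _ => subset_rfl)
      (biInter_mono Finset.subset_union_right fun _ _ => subset_rfl)
  simp [hempty] at h

section Unbounded

variable {E : Type*} [NormedAddCommGroup E] [NormedSpace ℝ E]

lemma Convex.exists_norm_eq_one_add_smul_mem_of_not_isBounded {K : Set E} (hK : Convex ℝ K)
    {a : E} (ha : a ∈ K) (hKb : ¬ Bornology.IsBounded K) {r : ℝ} (hr : 0 ≤ r) :
    ∃ v : E, ‖v‖ = 1 ∧ a + r • v ∈ K := by
  obtain ⟨x, hxK, hxr⟩ : ∃ x ∈ K, r < ‖x - a‖ := by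
    by_contra! h
    exact hKb (isBounded_closedBall.subset fun x hx => by simpa [dist_eq_norm] using h x hx)
  have hxa : 0 < ‖x - a‖ := hr.trans_lt hxr
  refine ⟨‖x - a‖⁻¹ • (x - a), by simp [norm_smul, hxa.ne'], ?_⟩
  convert hK.add_smul_sub_mem ha hxK ⟨div_nonneg hr hxa.le, (div_le_one hxa).2 hxr.le⟩ using 2
  rw [smul_smul, div_eq_mul_inv]

lemma IsClosed.exists_norm_eq_one_forall_add_smul_mem [ProperSpace E] {K : Set E}
    (hKc : IsClosed K) (hKv : Convex ℝ K) {a : E} (ha : a ∈ K)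
    (hKb : ¬ Bornology.IsBounded K) :
    ∃ v : E, ‖v‖ = 1 ∧ ∀ t : ℝ, 0 ≤ t → a + t • v ∈ K := by
  have hfip : ∀ u : Finset ℝ≥0,
      (sphere (0 : E) 1 ∩ ⋂ r ∈ u, {v | a + (r : ℝ) • v ∈ K}).Nonempty := by
    intro u
    obtain ⟨v, hv, hvK⟩ :=
      hKv.exists_norm_eq_one_add_smul_mem_of_not_isBounded ha hKb (u.sup id).2
    exact ⟨v, by simpa using hv, mem_iInter₂.2 fun r hr =>
      hKv.add_smul_mem_of_le ha hvK r.2 (Finset.le_sup (f := id) hr)⟩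
  obtain ⟨v, hv, hray⟩ := (isCompact_sphere (0 : E) 1).inter_iInter_nonempty
    (fun r : ℝ≥0 => {v | a + (r : ℝ) • v ∈ K})
    (fun r => hKc.preimage (f := fun v => a + (r : ℝ) • v) (by fun_prop)) hfip
  exact ⟨v, by simpa using hv, fun t ht => mem_iInter.1 hray ⟨t, ht⟩⟩

theorem exists_norm_eq_one_forall_mem_recessionCone [ProperSpace E] {ι : Type*}
    {F : ι → Set E} (hclosed : ∀ i, IsClosed (F i)) (hconv : ∀ i, Convex ℝ (F i))
    (hfin : ∀ s : Finset ι, (⋂ i ∈ s, F i).Nonempty) (hempty : ⋂ i, F i = ∅) :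
    ∃ v : E, ‖v‖ = 1 ∧ ∀ i, v ∈ recessionCone (F i) := by
  have hfip : ∀ u : Finset ι, (sphere (0 : E) 1 ∩ ⋂ i ∈ u, recessionCone (F i)).Nonempty := by
    intro u
    obtain ⟨a, ha⟩ := hfin u
    obtain ⟨v, hv, hray⟩ :=
      (isClosed_biInter fun i _ => hclosed i).exists_norm_eq_one_forall_add_smul_mem
      (convex_iInter₂ fun i _ => hconv i) ha
      (not_isBounded_biInter_of_iInter_eq_empty hclosed hfin hempty u)
    exact ⟨v, by simpa using hv, mem_iInter₂.2 fun i hi =>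
      (hconv i).mem_recessionCone_of_forall_add_smul_mem (hclosed i)
        fun t ht => mem_iInter₂.1 (hray t ht) i hi⟩
  obtain ⟨v, hv, hrec⟩ := (isCompact_sphere (0 : E) 1).inter_iInter_nonempty _
    (fun i => (hclosed i).recessionCone) hfip
  exact ⟨v, by simpa using hv, mem_iInter.1 hrec⟩

end Unbounded

theorem Convex.helly_theorem_of_infinite {𝕜 E ι : Type*} [Field 𝕜] [LinearOrder 𝕜]
    [IsStrictOrderedRing 𝕜] [AddCommGroup E] [Module 𝕜 E] [FiniteDimensional 𝕜 E] [Infinite ι]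
    {F : ι → Set E} (hconv : ∀ i, Convex 𝕜 (F i)) {n : ℕ} (hn : finrank 𝕜 E ≤ n)
    (hhelly : ∀ s : Finset ι, s.card = n + 1 → (⋂ i ∈ s, F i).Nonempty) (s : Finset ι) :
    (⋂ i ∈ s, F i).Nonempty := by
  refine helly_theorem' (fun i _ => hconv i) fun I _ hI => ?_
  obtain ⟨J, hIJ, hJ⟩ := Infinite.exists_superset_card_eq I (n + 1) (by omega)
  exact (hhelly J hJ).mono (biInter_mono hIJ fun _ _ => subset_rfl)

/-- If an infinite family of closed convex sets in `ℝ^d` has the `(d+1,d+1)`-property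
but empty total intersection, then there is a common unit recession direction `v`:
for every member `A` and every `a ∈ A`, the ray `{a + t·v : t ≥ 0}` lies in `A`. -/
theorem common_recession_direction (d : ℕ) {ι : Type*} [Infinite ι]
    (F : ι → Set (EuclideanSpace ℝ (Fin d)))
    (hclosed : ∀ i, IsClosed (F i)) (hconv : ∀ i, Convex ℝ (F i))
    (hhelly : ∀ s : Finset ι, s.card = d + 1 → (⋂ i ∈ s, F i).Nonempty)
    (hempty : (⋂ i, F i) = ∅) :
    ∃ v : EuclideanSpace ℝ (Fin d), ‖v‖ = 1 ∧
      ∀ i, ∀ a ∈ F i, ∀ t : ℝ, 0 ≤ t → a + t • v ∈ F i :=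
  exists_norm_eq_one_forall_mem_recessionCone hclosed hconv
    (Convex.helly_theorem_of_infinite hconv finrank_euclideanSpace_fin.le hhelly) hempty
end

section
/- Let F' be a finite family of closed convex sets in ℝ^d, each having the vector v = e_d as a recession direction, and let B be a compact convex set. Then ⋂_{A ∈ F'} (A ∩ B) ≠ ∅ if and only if ⋂_{A ∈ F'} Π(A ∩ B) ≠ ∅, where Π : ℝ^d → ℝ^{d-1} is the orthogonal projection forgetting the last coordinate. -/
/-- Let `F'` be a finite family of closed convex sets in `ℝ^d` (`d = n+1`), each having
`v = e_d` as a recession direction, and let `B` be a compact convex set.  Then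
`⋂_{A ∈ F'} (A ∩ B)` is nonempty iff `⋂_{A ∈ F'} Π(A ∩ B)` is nonempty, where
`Π : ℝ^d → ℝ^{d-1}` forgets the last coordinate. -/
theorem inter_nonempty_iff_proj_inter_nonempty (n : ℕ) {ι : Type*} [Fintype ι]
    (A : ι → Set (Fin (n + 1) → ℝ)) (B : Set (Fin (n + 1) → ℝ))
    (hclosed : ∀ i, IsClosed (A i)) (hconv : ∀ i, Convex ℝ (A i))
    (hrec : ∀ i, ∀ a ∈ A i, ∀ t : ℝ, 0 ≤ t →
      a + t • (Pi.single (Fin.last n) (1:ℝ) : Fin (n + 1) → ℝ) ∈ A i)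
    (hBcompact : IsCompact B) (hBconv : Convex ℝ B) :
    (⋂ i, A i ∩ B).Nonempty ↔
      (⋂ i, (fun x : Fin (n + 1) → ℝ => x ∘ Fin.castSucc) '' (A i ∩ B)).Nonempty := by
  constructor
  · rintro ⟨p, hp⟩
    simp only [Set.mem_iInter] at hp
    exact ⟨p ∘ Fin.castSucc, Set.mem_iInter.2 fun i => ⟨p, hp i, rfl⟩⟩
  · rintro ⟨x, hx⟩
    simp only [Set.mem_iInter, Set.mem_image] at hx
    rcases isEmpty_or_nonempty ι with hι | hι
    · exact ⟨fun _ => 0, Set.mem_iInter.2 fun i => (hι.elim i)⟩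
    obtain ⟨i0⟩ := hι
    obtain ⟨p0, hp0, hp0x⟩ := hx i0
    set K : Set (Fin (n+1) → ℝ) := B ∩ {y | y ∘ Fin.castSucc = x} with hK
    have hKcomp : IsCompact K := by
      apply hBcompact.inter_right
      exact isClosed_eq (continuous_pi fun j => continuous_apply _) continuous_const
    have hKne : K.Nonempty := ⟨p0, hp0.2, hp0x⟩
    obtain ⟨y, hyK, hymax⟩ := hKcomp.exists_isMaxOn hKne
      ((continuous_apply (Fin.last n)).continuousOn)
    refine ⟨y, Set.mem_iInter.2 fun i => ?_⟩
    obtain ⟨p, hp, hpx⟩ := hx i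
    have hpK : p ∈ K := ⟨hp.2, hpx⟩
    have ht : 0 ≤ y (Fin.last n) - p (Fin.last n) := sub_nonneg.2 (hymax hpK)
    have hy : y = p + (y (Fin.last n) - p (Fin.last n)) • (Pi.single (Fin.last n) (1:ℝ) : Fin (n + 1) → ℝ) := by
      funext j
      rcases Fin.eq_castSucc_or_eq_last j with ⟨k, rfl⟩ | rfl
      · have h1 : y (k.castSucc) = x k := congrFun hyK.2 k
        have h2 : p (k.castSucc) = x k := congrFun hpx k
        simp [Pi.single_eq_of_ne (Fin.castSucc_lt_last k).ne, h1, h2]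
      · simp
    exact ⟨hy ▸ hrec i p hp.1 _ ht, hyK.1⟩
end

section
/- Let p ≥ q ≥ d+1. Let F be an infinite family of closed convex sets in ℝ^d in which every d+1 members intersect, and let B be a family of p-d compact convex sets, no q-d+1 of which have a common point. If the union F ∪ B satisfies the (p,q)-property, then all members of F have a common point (π(F) = 1). -/
open Finset

/-- Lemma on critical families: let `p ≥ q ≥ d+1`, let `F` be an infinite family of
closed convex sets in `ℝ^d` with the `(d+1,d+1)`-property, and let `B` be a
`(q-d)`-free family of `p-d` compact convex sets (no `q-d+1` of them intersect).
If `F ∪ B` satisfies the `(p,q)`-property, then all members of `F` have a common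
point, i.e. `π(F) = 1`. -/
theorem pierce_one_of_free_family (p q d : ℕ) (hqd : d + 1 ≤ q) (hpq : q ≤ p)
    {ι : Type*} [Infinite ι]
    (F : ι → Set (EuclideanSpace ℝ (Fin d)))
    (hFclosed : ∀ i, IsClosed (F i)) (hFconv : ∀ i, Convex ℝ (F i))
    (hhelly : ∀ s : Finset ι, s.card = d + 1 → (⋂ i ∈ s, F i).Nonempty)
    (B : Fin (p - d) → Set (EuclideanSpace ℝ (Fin d)))
    (hBcompact : ∀ j, IsCompact (B j)) (hBconv : ∀ j, Convex ℝ (B j))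
    (hBfree : ∀ s : Finset (Fin (p - d)), s.card = q - d + 1 → ⋂ j ∈ s, B j = ∅)
    (hpqprop : ∀ I : Finset (ι ⊕ Fin (p - d)), I.card = p →
      ∃ J ⊆ I, J.card = q ∧ (⋂ i ∈ J, Sum.elim F B i).Nonempty) :
    (⋂ i, F i).Nonempty := by
  classical
  have hdp : d ≤ p := le_trans (le_trans (Nat.le_succ d) hqd) hpq
  -- a compact convex set containing all the B j
  obtain ⟨R, hR⟩ := ((isCompact_iUnion fun j => hBcompact j).isBounded).subset_closedBall 0
  set K : Set (EuclideanSpace ℝ (Fin d)) := Metric.closedBall 0 R with hK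
  have hBK : ∀ j, B j ⊆ K := fun j => (Set.subset_iUnion B j).trans hR
  have hKcompact : IsCompact K := isCompact_closedBall 0 R
  have hKconv : Convex ℝ K := convex_closedBall 0 R
  -- key claim: K meets the intersection of any d of the F i
  have claimd : ∀ s : Finset ι, s.card = d → (K ∩ ⋂ i ∈ s, F i).Nonempty := by
    intro s hs
    set I : Finset (ι ⊕ Fin (p - d)) :=
      s.image Sum.inl ∪ (Finset.univ : Finset (Fin (p - d))).image Sum.inr with hI
    have hIcard : I.card = p := by
      rw [hI, card_union_of_disjoint, card_image_of_injective _ Sum.inl_injective,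
        card_image_of_injective _ Sum.inr_injective, card_univ, Fintype.card_fin, hs]
      · omega
      · simp [Finset.disjoint_left]
    obtain ⟨J, hJI, hJcard, x, hx⟩ := hpqprop I hIcard
    simp only [Set.mem_iInter] at hx
    have hxF : ∀ i ∈ J.toLeft, x ∈ F i := fun i hi => hx (Sum.inl i) (mem_toLeft.mp hi)
    have hxB : ∀ j ∈ J.toRight, x ∈ B j := fun j hj => hx (Sum.inr j) (mem_toRight.mp hj)
    have hLsub : J.toLeft ⊆ s := by
      intro i hi
      have := hJI (mem_toLeft.mp hi)
      simp only [hI, mem_union, mem_image] at this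
      rcases this with ⟨a, ha, hai⟩ | ⟨a, _, hai⟩
      · exact (Sum.inl_injective hai) ▸ ha
      · exact absurd hai (by simp)
    have hRle : J.toRight.card ≤ q - d := by
      by_contra h
      push_neg at h
      obtain ⟨t, hts, htc⟩ := Finset.exists_subset_card_eq h
      have := hBfree t htc
      have hxt : x ∈ ⋂ j ∈ t, B j := Set.mem_iInter₂.mpr fun j hj => hxB j (hts hj)
      rw [this] at hxt
      exact hxt
    have hsum := J.card_toLeft_add_card_toRight
    have hLle : J.toLeft.card ≤ d := (card_le_card hLsub).trans_eq hs
    have hLeq : J.toLeft.card = d := by omega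
    have hLs : J.toLeft = s := Finset.eq_of_subset_of_card_le hLsub (by omega)
    have hRpos : 0 < J.toRight.card := by omega
    obtain ⟨j, hj⟩ := Finset.card_pos.mp hRpos
    refine ⟨x, hBK j (hxB j hj), Set.mem_iInter₂.mpr fun i hi => hxF i (hLs ▸ hi)⟩
  -- every finite subfamily of F meets K
  have hfin : ∀ t : Finset ι, (K ∩ ⋂ i ∈ t, F i).Nonempty := by
    intro t
    -- use Helly for the family indexed by Option ι
    set G : Option ι → Set (EuclideanSpace ℝ (Fin d)) := fun o => o.elim K F with hG
    have key : (⋂ o ∈ insert none (t.image some), G o).Nonempty := by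
      apply Convex.helly_theorem' (𝕜 := ℝ)
      · rintro (_ | i) _
        exacts [hKconv, hFconv i]
      · intro I hIsub hIcard
        rw [finrank_euclideanSpace_fin] at hIcard
        by_cases hn : none ∈ I
        · -- I contains K and at most d of the F's
          have hec : I.eraseNone.card ≤ d := by
            have : insert none (I.eraseNone.image some) = I := by
              ext (_ | i) <;> simp [mem_eraseNone, hn]
            have := congrArg Finset.card this
            rw [card_insert_of_notMem (by simp), card_image_of_injective _ (Option.some_injective _)] at this
            omega
          obtain ⟨u, huu, huc⟩ := Infinite.exists_superset_card_eq I.eraseNone d hec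
          obtain ⟨x, hxK, hxF⟩ := claimd u huc
          simp only [Set.mem_iInter₂] at hxF
          refine ⟨x, Set.mem_iInter₂.mpr ?_⟩
          rintro (_ | i) hi
          · exact hxK
          · exact hxF i (huu (mem_eraseNone.mpr hi))
        · -- all members come from F
          have hec : I.eraseNone.card ≤ d + 1 := by
            have : I.eraseNone.image some = I := by
              ext (_ | i) <;> simp [mem_eraseNone, hn]
            have := congrArg Finset.card this
            rw [card_image_of_injective _ (Option.some_injective _)] at this
            omega
          obtain ⟨u, huu, huc⟩ := Infinite.exists_superset_card_eq I.eraseNone (d+1) hec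
          obtain ⟨x, hxF⟩ := hhelly u huc
          simp only [Set.mem_iInter₂] at hxF
          refine ⟨x, Set.mem_iInter₂.mpr ?_⟩
          rintro (_ | i) hi
          · exact absurd hi hn
          · exact hxF i (huu (mem_eraseNone.mpr hi))
    obtain ⟨x, hx⟩ := key
    simp only [Set.mem_iInter₂] at hx
    refine ⟨x, hx none (mem_insert_self _ _), Set.mem_iInter₂.mpr fun i hi => ?_⟩
    exact hx (some i) (mem_insert_of_mem (mem_image_of_mem some hi))
  -- compactness argument
  cases isEmpty_or_nonempty ι with
  | inl h => simp
  | inr h =>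
    have := hKcompact.inter_iInter_nonempty F hFclosed (by intro t; simpa using hfin t)
    obtain ⟨x, hxK, hx⟩ := this
    exact ⟨x, hx⟩
end

section
/- Let G be a hypergraph whose edges all have exactly λ vertices, possibly with infinitely many vertices. If every finite subhypergraph H of G with at most η(λ, k+1) vertices has transversal number β(H) ≤ k, then β(G) ≤ k, where η is the Erdős–Gallai bound. -/
/-- The transversal (vertex covering) number of a finite hypergraph with edge set `E`
on the vertex set `Fin n`. -/
noncomputable def coverNumber {n : ℕ} (E : Finset (Finset (Fin n))) : ℕ :=
  sInf {m | ∃ T : Finset (Fin n), T.card = m ∧ ∀ e ∈ E, ∃ v ∈ e, v ∈ T}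

/-- `E` is a `k`-critical `lam`-hypergraph on `Fin n`: every edge has `lam` vertices,
there are no isolated vertices, the transversal number is `k`, and deleting any edge
decreases the transversal number. -/
noncomputable def IsCriticalHypergraph (lam k n : ℕ) (E : Finset (Finset (Fin n))) : Prop :=
  (∀ e ∈ E, e.card = lam) ∧ (∀ v : Fin n, ∃ e ∈ E, v ∈ e) ∧
    coverNumber E = k ∧ ∀ e ∈ E, coverNumber (E.erase e) < k

/-- The Erdős–Gallai bound `η(lam, k)`: the maximum number of vertices of a
`k`-critical `lam`-hypergraph. -/
noncomputable def erdosGallai (lam k : ℕ) : ℕ :=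
  sSup {n | ∃ E : Finset (Finset (Fin n)), IsCriticalHypergraph lam k n E}

open Finset

theorem coverNumber_le {n : ℕ} (E : Finset (Finset (Fin n))) (T : Finset (Fin n))
    (hT : ∀ e ∈ E, ∃ v ∈ e, v ∈ T) : coverNumber E ≤ T.card :=
  Nat.sInf_le ⟨T, rfl, hT⟩

theorem coverNumber_spec {n : ℕ} (E : Finset (Finset (Fin n))) (hE : ∀ e ∈ E, e.Nonempty) :
    ∃ T : Finset (Fin n), T.card = coverNumber E ∧ ∀ e ∈ E, ∃ v ∈ e, v ∈ T := by
  have hne : {m | ∃ T : Finset (Fin n), T.card = m ∧ ∀ e ∈ E, ∃ v ∈ e, v ∈ T}.Nonempty :=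
    ⟨(Finset.univ : Finset (Fin n)).card, Finset.univ, rfl,
      fun e he => (hE e he).imp fun v hv => ⟨hv, Finset.mem_univ v⟩⟩
  exact Nat.sInf_mem hne

def crossBound (b : ℕ) : ℕ → ℕ
  | 0 => 1
  | (l+1) => 1 + b * crossBound b l

theorem cross_bound {V : Type*} [DecidableEq V] (b : ℕ) (l : ℕ) :
    ∀ (S : Finset (Finset V × Finset V)),
      (∀ p ∈ S, p.1.card ≤ l) → (∀ p ∈ S, p.2.card ≤ b) →
      (∀ p ∈ S, Disjoint p.1 p.2) →
      (∀ p ∈ S, ∀ q ∈ S, p ≠ q → ¬ Disjoint p.1 q.2) →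
      S.card ≤ crossBound b l := by
  induction l with
  | zero =>
      intro S h1 _ _ h4
      refine Finset.card_le_one.mpr fun p hp q hq => ?_
      by_contra hpq
      have h0 : p.1 = ∅ := Finset.card_eq_zero.mp (Nat.le_zero.mp (h1 p hp))
      exact h4 p hp q hq hpq (by simp [h0])
  | succ l ih =>
      intro S h1 h2 h3 h4
      rcases S.eq_empty_or_nonempty with rfl | ⟨p₀, hp₀⟩
      · simp [crossBound]
      · have hsub : S.erase p₀ ⊆ (p₀.2).biUnion
            (fun v => (S.erase p₀).filter (fun q => v ∈ q.1)) := by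
          intro q hq
          have hqS := Finset.mem_of_mem_erase hq
          have hne := Finset.ne_of_mem_erase hq
          obtain ⟨x, hx1, hx2⟩ := Finset.not_disjoint_iff.mp (h4 q hqS p₀ hp₀ hne)
          exact Finset.mem_biUnion.mpr ⟨x, hx2, Finset.mem_filter.mpr ⟨hq, hx1⟩⟩
        have hcount : ∀ v ∈ p₀.2,
            ((S.erase p₀).filter (fun q => v ∈ q.1)).card ≤ crossBound b l := by
          intro v _
          set Sv := (S.erase p₀).filter (fun q => v ∈ q.1) with hSv
          have hmem : ∀ q ∈ Sv, q ∈ S ∧ v ∈ q.1 := fun q hq =>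
            ⟨Finset.mem_of_mem_erase (Finset.mem_filter.mp hq).1, (Finset.mem_filter.mp hq).2⟩
          set f : Finset V × Finset V → Finset V × Finset V :=
            fun q => (q.1.erase v, q.2) with hf
          have hinj : Set.InjOn f Sv := by
            intro q hq r hr hqr
            have hq' := hmem q hq
            have hr' := hmem r hr
            have h1' : q.1 = r.1 := by
              have := congrArg Prod.fst hqr
              simp only [hf] at this
              calc q.1 = insert v (q.1.erase v) := (Finset.insert_erase hq'.2).symm
                _ = insert v (r.1.erase v) := by rw [this]
                _ = r.1 := Finset.insert_erase hr'.2
            have h2' := congrArg Prod.snd hqr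
            simp only [hf] at h2'
            exact Prod.ext h1' h2'
          have hcard : Sv.card = (Sv.image f).card := (Finset.card_image_of_injOn hinj).symm
          rw [hcard]
          refine ih (Sv.image f) ?_ ?_ ?_ ?_
          · rintro p hp
            obtain ⟨q, hq, rfl⟩ := Finset.mem_image.mp hp
            have := hmem q hq
            have hc := h1 q this.1
            have : (q.1.erase v).card = q.1.card - 1 := Finset.card_erase_of_mem this.2
            simp only [hf]
            omega
          · rintro p hp
            obtain ⟨q, hq, rfl⟩ := Finset.mem_image.mp hp
            exact h2 q (hmem q hq).1
          · rintro p hp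
            obtain ⟨q, hq, rfl⟩ := Finset.mem_image.mp hp
            exact Finset.disjoint_of_subset_left (Finset.erase_subset v q.1) (h3 q (hmem q hq).1)
          · rintro p hp p' hp' hne
            obtain ⟨q, hq, rfl⟩ := Finset.mem_image.mp hp
            obtain ⟨r, hr, rfl⟩ := Finset.mem_image.mp hp'
            have hqr : q ≠ r := fun h => hne (by rw [h])
            obtain ⟨x, hx1, hx2⟩ :=
              Finset.not_disjoint_iff.mp (h4 q (hmem q hq).1 r (hmem r hr).1 hqr)
            have hvr : v ∉ r.2 :=
              Finset.disjoint_left.mp (h3 r (hmem r hr).1) (hmem r hr).2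
            have hxv : x ≠ v := fun h => hvr (h ▸ hx2)
            exact Finset.not_disjoint_iff.mpr ⟨x, Finset.mem_erase.mpr ⟨hxv, hx1⟩, hx2⟩
        have h5 : (S.erase p₀).card ≤ b * crossBound b l := by
          calc (S.erase p₀).card ≤ _ := Finset.card_le_card hsub
            _ ≤ ∑ v ∈ p₀.2, ((S.erase p₀).filter (fun q => v ∈ q.1)).card :=
              Finset.card_biUnion_le
            _ ≤ ∑ _v ∈ p₀.2, crossBound b l := Finset.sum_le_sum hcount
            _ = p₀.2.card * crossBound b l := by rw [Finset.sum_const, smul_eq_mul]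
            _ ≤ b * crossBound b l := Nat.mul_le_mul_right _ (h2 p₀ hp₀)
        have := Finset.card_erase_of_mem hp₀
        have hpos : 1 ≤ S.card := Finset.card_pos.mpr ⟨p₀, hp₀⟩
        simp only [crossBound]
        omega

theorem critical_bound (lam k n : ℕ) (hlam : 1 ≤ lam) (E : Finset (Finset (Fin n)))
    (h : IsCriticalHypergraph lam k n E) : n ≤ crossBound (k - 1) lam * lam := by
  obtain ⟨hc, hiso, hcov, hcrit⟩ := h
  have hne : ∀ e ∈ E, e.Nonempty := fun e he =>
    Finset.card_pos.mp (by rw [hc e he]; omega)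
  -- choose transversals
  have hT : ∀ e ∈ E, ∃ T : Finset (Fin n), T.card ≤ k - 1 ∧
      (∀ f ∈ E.erase e, ∃ v ∈ f, v ∈ T) ∧ Disjoint e T := by
    intro e he
    have hlt := hcrit e he
    obtain ⟨T, hTc, hTcov⟩ := coverNumber_spec (E.erase e)
      (fun f hf => hne f (Finset.mem_of_mem_erase hf))
    refine ⟨T, by omega, hTcov, ?_⟩
    rw [Finset.disjoint_right]
    intro x hxT hxe
    have hcovE : ∀ f ∈ E, ∃ v ∈ f, v ∈ T := by
      intro f hf
      by_cases hfe : f = e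
      · exact ⟨x, hfe ▸ hxe, hxT⟩
      · exact hTcov f (Finset.mem_erase.mpr ⟨hfe, hf⟩)
    have := coverNumber_le E T hcovE
    omega
  choose! T hT1 hT2 hT3 using hT
  -- the set-pair system
  set S : Finset (Finset (Fin n) × Finset (Fin n)) := E.image (fun e => (e, T e)) with hS
  have hScard : S.card = E.card := by
    rw [hS]
    apply Finset.card_image_of_injOn
    intro e _ f _ hef
    exact congrArg Prod.fst hef
  have hEcard : E.card ≤ crossBound (k - 1) lam := by
    rw [← hScard]
    refine cross_bound (k-1) lam S ?_ ?_ ?_ ?_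
    · rintro p hp
      obtain ⟨e, he, rfl⟩ := Finset.mem_image.mp hp
      exact le_of_eq (hc e he)
    · rintro p hp
      obtain ⟨e, he, rfl⟩ := Finset.mem_image.mp hp
      exact hT1 e he
    · rintro p hp
      obtain ⟨e, he, rfl⟩ := Finset.mem_image.mp hp
      exact hT3 e he
    · rintro p hp q hq hpq
      obtain ⟨e, he, rfl⟩ := Finset.mem_image.mp hp
      obtain ⟨f, hf, rfl⟩ := Finset.mem_image.mp hq
      have hef : e ≠ f := fun h => hpq (by rw [h])
      obtain ⟨v, hv1, hv2⟩ := hT2 f hf e (Finset.mem_erase.mpr ⟨hef, he⟩)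
      exact Finset.not_disjoint_iff.mpr ⟨v, hv1, hv2⟩
  -- every vertex is in some edge
  have hn : n ≤ E.card * lam := by
    have hsub : (Finset.univ : Finset (Fin n)) ⊆ E.biUnion id := by
      intro v _
      obtain ⟨e, he, hve⟩ := hiso v
      exact Finset.mem_biUnion.mpr ⟨e, he, hve⟩
    calc n = (Finset.univ : Finset (Fin n)).card := (by simp)
      _ ≤ (E.biUnion id).card := Finset.card_le_card hsub
      _ ≤ ∑ e ∈ E, (id e).card := Finset.card_biUnion_le
      _ = ∑ e ∈ E, lam := Finset.sum_congr rfl (fun e he => hc e he)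
      _ = E.card * lam := by rw [Finset.sum_const, smul_eq_mul]
  calc n ≤ E.card * lam := hn
    _ ≤ crossBound (k-1) lam * lam := Nat.mul_le_mul_right _ hEcard

theorem bddAbove_critical (lam k : ℕ) (hlam : 1 ≤ lam) :
    BddAbove {n | ∃ E : Finset (Finset (Fin n)), IsCriticalHypergraph lam k n E} := by
  refine ⟨crossBound (k - 1) lam * lam, ?_⟩
  rintro n ⟨E, hE⟩
  exact critical_bound lam k n hlam E hE

theorem compactness {V : Type*} (k : ℕ) (E : Set (Finset V))
    (h : ∀ F : Finset (Finset V), ↑F ⊆ E →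
      ∃ T : Finset V, T.card ≤ k ∧ ∀ e ∈ F, ∃ v ∈ e, v ∈ T) :
    ∃ T : Finset V, T.card ≤ k ∧ ∀ e ∈ E, ∃ v ∈ e, v ∈ T := by
  classical
  induction k generalizing E with
  | zero =>
      refine ⟨∅, le_refl _, fun e he => ?_⟩
      obtain ⟨T, hT, hcov⟩ := h {e} (by simpa using he)
      have : T = ∅ := Finset.card_eq_zero.mp (Nat.le_zero.mp hT)
      obtain ⟨v, _, hv⟩ := hcov e (Finset.mem_singleton_self e)
      simp [this] at hv
  | succ k ih =>
      by_cases hex : ∃ v : V, ∀ F : Finset (Finset V), ↑F ⊆ E →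
          ∃ T : Finset V, T.card ≤ k + 1 ∧ v ∈ T ∧ ∀ e ∈ F, ∃ x ∈ e, x ∈ T
      · obtain ⟨v, hv⟩ := hex
        set E' : Set (Finset V) := {e ∈ E | v ∉ e} with hE'
        obtain ⟨T₀, hT₀c, hT₀cov⟩ := ih E' (by
          intro F hF
          have hFE : ↑F ⊆ E := fun e he => (hF he).1
          obtain ⟨T, hTc, hvT, hTcov⟩ := hv F hFE
          refine ⟨T.erase v, ?_, ?_⟩
          · have := Finset.card_erase_of_mem hvT
            omega
          · intro e he
            obtain ⟨x, hx1, hx2⟩ := hTcov e he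
            have hxv : x ≠ v := fun hh => (hF he).2 (hh ▸ hx1)
            exact ⟨x, hx1, Finset.mem_erase.mpr ⟨hxv, hx2⟩⟩)
        refine ⟨insert v T₀, ?_, ?_⟩
        · have := Finset.card_insert_le v T₀
          omega
        · intro e he
          by_cases hve : v ∈ e
          · exact ⟨v, hve, Finset.mem_insert_self v T₀⟩
          · obtain ⟨x, hx1, hx2⟩ := hT₀cov e ⟨he, hve⟩
            exact ⟨x, hx1, Finset.mem_insert_of_mem hx2⟩
      · push_neg at hex
        rcases Set.eq_empty_or_nonempty E with rfl | ⟨e₀, he₀⟩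
        · exact ⟨∅, by simp, fun e he => absurd he (Set.notMem_empty e)⟩
        · exfalso
          choose F hF1 hF2 using hex
          -- hF2 : ∀ v, ∀ T, ¬(T.card ≤ k+1 ∧ v ∈ T ∧ covers (F v))
          set G : Finset (Finset V) := insert e₀ (e₀.biUnion F) with hG
          have hGE : ↑G ⊆ E := by
            intro e he
            rw [hG] at he
            simp only [Finset.coe_insert, Set.mem_insert_iff] at he
            rcases he with rfl | he
            · exact he₀
            · obtain ⟨v, _, hv⟩ := Finset.mem_biUnion.mp (by exact_mod_cast he)
              exact hF1 v hv
          obtain ⟨T, hTc, hTcov⟩ := h G hGE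
          obtain ⟨v, hv1, hv2⟩ := hTcov e₀ (Finset.mem_insert_self _ _)
          have hcovFv : ∀ e ∈ F v, ∃ x ∈ e, x ∈ T := by
            intro e he
            exact hTcov e (Finset.mem_insert_of_mem (Finset.mem_biUnion.mpr ⟨v, hv1, he⟩))
          obtain ⟨e, he, hbad⟩ := hF2 v T hTc hv2
          obtain ⟨x, hx1, hx2⟩ := hcovFv e he
          exact hbad x hx1 hx2

theorem finite_case {V : Type*} (lam k : ℕ) (hlam : 2 ≤ lam)
    (E : Set (Finset V)) (hcard : ∀ e ∈ E, e.card = lam)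
    (hsub : ∀ W : Finset V, W.card ≤ erdosGallai lam (k + 1) →
      ∃ T ⊆ W, T.card ≤ k ∧ ∀ e ∈ E, ↑e ⊆ (W : Set V) → ∃ v ∈ e, v ∈ T)
    (F : Finset (Finset V)) (hFE : ↑F ⊆ E) :
    ∃ T : Finset V, T.card ≤ k ∧ ∀ e ∈ F, ∃ v ∈ e, v ∈ T := by
  classical
  by_contra hcon
  set C := F.powerset.filter
    (fun G => ¬ ∃ T : Finset V, T.card ≤ k ∧ ∀ e ∈ G, ∃ v ∈ e, v ∈ T) with hC
  have hCne : C.Nonempty :=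
    ⟨F, Finset.mem_filter.mpr ⟨Finset.mem_powerset_self F, hcon⟩⟩
  obtain ⟨F', hF'C, hmin⟩ := Finset.exists_min_image C Finset.card hCne
  have hF'F : F' ⊆ F := Finset.mem_powerset.mp (Finset.mem_filter.mp hF'C).1
  have hF'no : ¬ ∃ T : Finset V, T.card ≤ k ∧ ∀ e ∈ F', ∃ v ∈ e, v ∈ T :=
    (Finset.mem_filter.mp hF'C).2
  have hsmall : ∀ G ⊆ F, G.card < F'.card →
      ∃ T : Finset V, T.card ≤ k ∧ ∀ e ∈ G, ∃ v ∈ e, v ∈ T := by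
    intro G hG hGcard
    by_contra hh
    have hGC : G ∈ C := Finset.mem_filter.mpr ⟨Finset.mem_powerset.mpr hG, hh⟩
    have := hmin G hGC
    omega
  have hF'E : ∀ e ∈ F', e ∈ E := fun e he => hFE (hF'F he)
  have hF'lam : ∀ e ∈ F', e.card = lam := fun e he => hcard e (hF'E e he)
  have hF'nonempty_edges : ∀ e ∈ F', e.Nonempty := fun e he =>
    Finset.card_pos.mp (by rw [hF'lam e he]; omega)
  have hF'ne : F'.Nonempty := by
    rcases F'.eq_empty_or_nonempty with rfl | h
    · exact absurd ⟨∅, by simp⟩ hF'no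
    · exact h
  set W := F'.biUnion id with hWdef
  have hW : ∀ e ∈ F', e ⊆ W := fun e he v hv =>
    Finset.mem_biUnion.mpr ⟨e, he, hv⟩
  set n := W.card with hn
  set ι : {x // x ∈ W} ≃ Fin n := W.equivFin with hι
  set Φ : Finset V → Finset (Fin n) :=
    fun e => Finset.univ.filter (fun j => ((ι.symm j : {x // x ∈ W}) : V) ∈ e) with hΦ
  have hΦmem : ∀ (e : Finset V) (j : Fin n),
      j ∈ Φ e ↔ ((ι.symm j : {x // x ∈ W}) : V) ∈ e := by
    intro e j; simp [hΦ]
  have hΦmem' : ∀ (e : Finset V) (v : V) (hv : v ∈ W), v ∈ e → ι ⟨v, hv⟩ ∈ Φ e := by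
    intro e v hv hve
    rw [hΦmem]
    simpa using hve
  have hΦcard_le : ∀ e : Finset V, (Φ e).card ≤ e.card := by
    intro e
    apply Finset.card_le_card_of_injOn (fun j => ((ι.symm j : {x // x ∈ W}) : V))
    · intro j hj; exact (hΦmem e j).mp hj
    · intro j _ j' _ hjj'
      exact ι.symm.injective (Subtype.val_injective hjj')
  have hΦcard : ∀ e : Finset V, e ⊆ W → (Φ e).card = e.card := by
    intro e heW
    apply Finset.card_bij (fun j _ => ((ι.symm j : {x // x ∈ W}) : V))
    · intro j hj; exact (hΦmem e j).mp hj
    · intro j _ j' _ hjj'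
      exact ι.symm.injective (Subtype.val_injective hjj')
    · intro v hv
      exact ⟨ι ⟨v, heW hv⟩, hΦmem' e v (heW hv) hv, by simp⟩
  have hΦinj : ∀ e ⊆ W, ∀ f ⊆ W, Φ e = Φ f → e = f := by
    intro e heW f hfW hef
    ext v
    constructor
    · intro hv
      have := hΦmem' e v (heW hv) hv
      rw [hef, hΦmem] at this
      simpa using this
    · intro hv
      have := hΦmem' f v (hfW hv) hv
      rw [← hef, hΦmem] at this
      simpa using this
  set E' : Finset (Finset (Fin n)) := F'.image Φ with hE'
  have hE'mem : ∀ e' ∈ E', ∃ e ∈ F', Φ e = e' := fun e' he' =>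
    Finset.mem_image.mp he'
  have hE'card : ∀ e' ∈ E', e'.card = lam := by
    rintro e' he'
    obtain ⟨e, he, rfl⟩ := hE'mem e' he'
    rw [hΦcard e (hW e he)]
    exact hF'lam e he
  have hE'nonempty : ∀ e' ∈ E', e'.Nonempty := fun e' he' =>
    Finset.card_pos.mp (by rw [hE'card e' he']; omega)
  -- forward transfer of covers
  have hforward : ∀ (G : Finset (Finset V)), (∀ e ∈ G, e ⊆ W) →
      ∀ (T : Finset V), (∀ e ∈ G, ∃ v ∈ e, v ∈ T) →
      ∀ e ∈ G, ∃ j ∈ Φ e, j ∈ Φ T := by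
    intro G hGW T hTcov e he
    obtain ⟨v, hv1, hv2⟩ := hTcov e he
    have hvW : v ∈ W := hGW e he hv1
    exact ⟨ι ⟨v, hvW⟩, hΦmem' e v hvW hv1, hΦmem' T v hvW hv2⟩
  -- coverNumber E' = k + 1
  have hcov_ge : ¬ coverNumber E' ≤ k := by
    intro hle
    obtain ⟨T', hT'c, hT'cov⟩ := coverNumber_spec E' hE'nonempty
    set T : Finset V := T'.image (fun j => ((ι.symm j : {x // x ∈ W}) : V)) with hT
    refine hF'no ⟨T, ?_, ?_⟩
    · calc T.card ≤ T'.card := Finset.card_image_le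
        _ = coverNumber E' := hT'c
        _ ≤ k := hle
    · intro e he
      obtain ⟨j, hj1, hj2⟩ := hT'cov (Φ e) (Finset.mem_image_of_mem Φ he)
      exact ⟨((ι.symm j : {x // x ∈ W}) : V), (hΦmem e j).mp hj1,
        Finset.mem_image_of_mem _ hj2⟩
  have hcov_le : coverNumber E' ≤ k + 1 := by
    obtain ⟨e₀, he₀⟩ := hF'ne
    obtain ⟨v₀, hv₀⟩ := hF'nonempty_edges e₀ he₀
    have herase : F'.erase e₀ ⊆ F := (Finset.erase_subset e₀ F').trans hF'F
    obtain ⟨T, hTc, hTcov⟩ := hsmall (F'.erase e₀) herase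
      (Finset.card_erase_lt_of_mem he₀)
    have hv₀W : v₀ ∈ W := hW e₀ he₀ hv₀
    set T' : Finset (Fin n) := insert (ι ⟨v₀, hv₀W⟩) (Φ T) with hT'
    have hcov : ∀ e' ∈ E', ∃ j ∈ e', j ∈ T' := by
      rintro e' he'
      obtain ⟨e, he, rfl⟩ := hE'mem e' he'
      by_cases hee : e = e₀
      · subst hee
        exact ⟨ι ⟨v₀, hv₀W⟩, hΦmem' e v₀ hv₀W hv₀, Finset.mem_insert_self _ _⟩
      · obtain ⟨j, hj1, hj2⟩ := hforward (F'.erase e₀)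
          (fun f hf => hW f (Finset.mem_of_mem_erase hf)) T hTcov e
          (Finset.mem_erase.mpr ⟨hee, he⟩)
        exact ⟨j, hj1, Finset.mem_insert_of_mem hj2⟩
    calc coverNumber E' ≤ T'.card := coverNumber_le E' T' hcov
      _ ≤ (Φ T).card + 1 := Finset.card_insert_le _ _
      _ ≤ T.card + 1 := by have := hΦcard_le T; omega
      _ ≤ k + 1 := by omega
  have hcov_eq : coverNumber E' = k + 1 := by omega
  -- criticality
  have hcrit : ∀ e' ∈ E', coverNumber (E'.erase e') < k + 1 := by
    rintro e' he'
    obtain ⟨e, he, rfl⟩ := hE'mem e' he'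
    have herase : F'.erase e ⊆ F := (Finset.erase_subset e F').trans hF'F
    obtain ⟨T, hTc, hTcov⟩ := hsmall (F'.erase e) herase
      (Finset.card_erase_lt_of_mem he)
    have hcov : ∀ f' ∈ E'.erase (Φ e), ∃ j ∈ f', j ∈ Φ T := by
      intro f' hf'
      obtain ⟨f, hf, rfl⟩ := hE'mem f' (Finset.mem_of_mem_erase hf')
      have hfe : f ≠ e := by
        intro hh
        exact (Finset.ne_of_mem_erase hf') (by rw [hh])
      exact hforward (F'.erase e)
        (fun g hg => hW g (Finset.mem_of_mem_erase hg)) T hTcov f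
        (Finset.mem_erase.mpr ⟨hfe, hf⟩)
    calc coverNumber (E'.erase (Φ e)) ≤ (Φ T).card := coverNumber_le _ _ hcov
      _ ≤ T.card := hΦcard_le T
      _ ≤ k := hTc
      _ < k + 1 := by omega
  -- no isolated vertices
  have hiso : ∀ i : Fin n, ∃ e' ∈ E', i ∈ e' := by
    intro i
    have hx := (ι.symm i).2
    obtain ⟨f, hf, hxf⟩ := Finset.mem_biUnion.mp
      (show ((ι.symm i : {x // x ∈ W}) : V) ∈ F'.biUnion id from hx)
    exact ⟨Φ f, Finset.mem_image_of_mem Φ hf, (hΦmem f i).mpr hxf⟩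
  have hcritical : IsCriticalHypergraph lam (k + 1) n E' :=
    ⟨hE'card, hiso, hcov_eq, hcrit⟩
  have hnmem : n ∈ {m | ∃ E : Finset (Finset (Fin m)), IsCriticalHypergraph lam (k+1) m E} :=
    ⟨E', hcritical⟩
  have hnle : n ≤ erdosGallai lam (k + 1) :=
    le_csSup (bddAbove_critical lam (k + 1) (by omega)) hnmem
  obtain ⟨T, hTW, hTc, hTcov⟩ := hsub W (by rw [← hn]; exact hnle)
  refine hF'no ⟨T, hTc, ?_⟩
  intro e he
  exact hTcov e (hF'E e he) (Finset.coe_subset.mpr (hW e he))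



/-- Infinite Erdős–Gallai theorem: let `G` be a `lam`-uniform hypergraph, possibly on
infinitely many vertices.  If every finite subhypergraph on at most `η(lam, k+1)`
vertices has transversal number at most `k`, then `G` has transversal number at
most `k`. -/
theorem erdosGallai_infinite (lam k : ℕ) (hlam : 2 ≤ lam)
    (V : Type*) (E : Set (Finset V)) (hcard : ∀ e ∈ E, e.card = lam)
    (hsub : ∀ W : Finset V, W.card ≤ erdosGallai lam (k + 1) →
      ∃ T ⊆ W, T.card ≤ k ∧ ∀ e ∈ E, ↑e ⊆ (W : Set V) → ∃ v ∈ e, v ∈ T) :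
    ∃ T : Finset V, T.card ≤ k ∧ ∀ e ∈ E, ∃ v ∈ e, v ∈ T :=
  compactness k E (fun F hF => finite_case lam k hlam E hcard hsub F hF)
end

section
/- Let p ≥ q ≥ d+1 with q ≥ p - q + d + 1. Let F be a family of closed convex sets in ℝ^d in which every d+1 members intersect, and let B_1, ..., B_{p-q+1} be compact convex sets such that F ∪ {B_1, ..., B_{p-q+1}} satisfies the (p,q)-property. Then the family {A ∩ B : A ∈ F}, where B = conv(B_1 ∪ ... ∪ B_{p-q+1}), satisfies the (q-1, d)-property: among any q-1 members, some d have a common point. -/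
/-- Let `p ≥ q ≥ d+1` with `q ≥ p - q + d + 1`.  Let `F` be a family of closed convex
sets in `ℝ^d` with the `(d+1,d+1)`-property and let `B_1, …, B_{p-q+1}` be compact
convex sets such that `F ∪ {B_1, …, B_{p-q+1}}` satisfies the `(p,q)`-property.  Then
the family `{A ∩ B : A ∈ F}`, where `B = conv(B_1 ∪ ⋯ ∪ B_{p-q+1})`, satisfies the
`(q-1, d)`-property. -/
theorem capped_family_satisfies_qm1_d (p q d : ℕ)
    (hqd : d + 1 ≤ q) (hpq : q ≤ p) (hq2 : p - q + d + 1 ≤ q)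
    {ι : Type*}
    (F : ι → Set (EuclideanSpace ℝ (Fin d)))
    (hFclosed : ∀ i, IsClosed (F i)) (hFconv : ∀ i, Convex ℝ (F i))
    (hhelly : ∀ s : Finset ι, s.card = d + 1 → (⋂ i ∈ s, F i).Nonempty)
    (B : Fin (p - q + 1) → Set (EuclideanSpace ℝ (Fin d)))
    (hBcompact : ∀ j, IsCompact (B j)) (hBconv : ∀ j, Convex ℝ (B j))
    (hpqprop : ∀ I : Finset (ι ⊕ Fin (p - q + 1)), I.card = p →
      ∃ J ⊆ I, J.card = q ∧ (⋂ i ∈ J, Sum.elim F B i).Nonempty) :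
    ∀ s : Finset ι, s.card = q - 1 →
      ∃ u ⊆ s, u.card = d ∧
        (⋂ i ∈ u, F i ∩ convexHull ℝ (⋃ j, B j)).Nonempty := by
  intro s hs
  classical
  set I : Finset (ι ⊕ Fin (p - q + 1)) :=
    s.disjSum Finset.univ with hI
  have hIcard : I.card = p := by
    rw [hI, Finset.card_disjSum, hs, Finset.card_univ, Fintype.card_fin]
    omega
  obtain ⟨J, hJI, hJcard, x, hx⟩ := hpqprop I hIcard
  have hsplit := Finset.card_toLeft_add_card_toRight (u := J)
  have hLsub : J.toLeft ⊆ s := by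
    intro i hi
    have : Sum.inl i ∈ I := hJI (Finset.mem_toLeft.mp hi)
    simpa [hI] using this
  have hRle : J.toRight.card ≤ p - q + 1 := by
    have := Finset.card_le_card (Finset.toRight_subset_toRight hJI)
    simpa [hI] using this.trans (Finset.card_le_univ _)
  have hLge : d ≤ J.toLeft.card := by omega
  obtain ⟨u, hus, hucard⟩ := Finset.exists_subset_card_eq hLge
  have hRne : J.toRight.Nonempty := by
    rw [← Finset.card_pos]
    have hLle : J.toLeft.card ≤ q - 1 := hs ▸ Finset.card_le_card hLsub
    omega
  obtain ⟨j, hj⟩ := hRne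
  have hxB : x ∈ convexHull ℝ (⋃ j, B j) := by
    apply subset_convexHull
    exact Set.mem_iUnion.mpr ⟨j,
      Set.mem_iInter₂.mp hx (Sum.inr j) (Finset.mem_toRight.mp hj)⟩
  refine ⟨u, hus.trans hLsub, hucard, x, Set.mem_iInter₂.mpr fun i hi => ?_⟩
  refine ⟨?_, hxB⟩
  exact Set.mem_iInter₂.mp hx (Sum.inl i) (Finset.mem_toLeft.mp (hus hi))
end

section
/- For each n ≥ 0, let F_n = {x ∈ ℝ : x ≥ n} and F_0' = {0}. The family {F_0'} ∪ {F_n : n ≥ 1} of closed convex subsets of ℝ satisfies: among any 4 members, some 3 have a common point; it contains a bounded member; yet for every finite set S ⊂ ℝ there is a member of the family disjoint from S. -/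
open Bornology

/-- Grünbaum's counterexample on the line: the family `{F₀'} ∪ {F_n : n ≥ 1}`, with
`F₀' = {0}` and `F_n = [n, ∞)`, consists of closed convex subsets of `ℝ`, satisfies
the `(4,3)`-property, contains a bounded member, and yet every finite set `S ⊆ ℝ`
misses some member of the family. -/
theorem grunbaum_counterexample :
    let F : ℕ → Set ℝ := fun n => if n = 0 then {0} else Set.Ici (n : ℝ)
    (∀ n, IsClosed (F n) ∧ Convex ℝ (F n)) ∧
    (∀ s : Finset ℕ, s.card = 4 →
      ∃ u ⊆ s, u.card = 3 ∧ (⋂ n ∈ u, F n).Nonempty) ∧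
    (∃ n, IsBounded (F n)) ∧
    (∀ S : Finset ℝ, ∃ n, ∀ x ∈ S, x ∉ F n) := by
  intro F
  refine ⟨?_, ?_, ?_, ?_⟩
  · intro n
    by_cases h : n = 0
    · simp only [F, if_pos h]
      exact ⟨isClosed_singleton, convex_singleton 0⟩
    · simp only [F, if_neg h]
      exact ⟨isClosed_Ici, convex_Ici _⟩
  · intro s hs
    have hcard : 3 ≤ (s.erase 0).card := by
      have := Finset.pred_card_le_card_erase (a := 0) (s := s)
      omega
    obtain ⟨u, hus, hu3⟩ := Finset.exists_subset_card_eq hcard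
    refine ⟨u, hus.trans (Finset.erase_subset _ _), hu3, ((u.sup id : ℕ) : ℝ), ?_⟩
    simp only [Set.mem_iInter]
    intro n hn
    have hn0 : n ≠ 0 := Finset.ne_of_mem_erase (hus hn)
    simp only [F, if_neg hn0, Set.mem_Ici]
    exact_mod_cast Finset.le_sup (f := id) hn
  · exact ⟨0, by simp [F, Bornology.isBounded_singleton]⟩
  · intro S
    refine ⟨S.sup (fun x => ⌈x⌉₊) + 1, fun x hx => ?_⟩
    simp only [F, if_neg (Nat.succ_ne_zero _), Set.mem_Ici, not_le]
    have h1 : x ≤ (⌈x⌉₊ : ℝ) := Nat.le_ceil x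
    have h2 : ⌈x⌉₊ ≤ S.sup (fun x => ⌈x⌉₊) := Finset.le_sup (f := fun x => ⌈x⌉₊) hx
    have h2' : (⌈x⌉₊ : ℝ) ≤ ((S.sup (fun x => ⌈x⌉₊) : ℕ) : ℝ) := by exact_mod_cast h2
    push_cast
    linarith
end
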